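/- A Riemannian immersion φ: (Mᵐ,g) → (N,h) with S₂ = 0 and m ≠ 4 is minimal. (From the trace of S₂ = 0 for a Riemannian immersion one gets ((4−m)/2)|τ(φ)|² = 0 pointwise.) -/

import Mathlib

/-! Tracing `S₂` in an orthonormal frame gives `(m/2)|τ|² + (m − 2)⟨dφ, ∇τ⟩`, and for an
immersion `⟨dφ, ∇τ⟩ = −⟨τ, trace B⟩ = −|τ|²`. Hence `0 = trace S₂ = ((4 − m)/2)|τ|²`,
which forces `τ = 0` when `m ≠ 4`. -/

open scoped RealInnerProductSpace
noncomputable section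

/-- A fixed orthonormal frame of the (model) tangent space of the `m`-dimensional
Riemannian manifold `M`. -/
def onb (m : ℕ) : OrthonormalBasis (Fin m) ℝ (EuclideanSpace ℝ (Fin m)) :=
  EuclideanSpace.basisFun (Fin m) ℝ

/-- The biharmonic stress-energy tensor
`S₂(X,Y) = ½|τ(φ)|² ⟨X,Y⟩ + ⟨dφ,∇τ(φ)⟩ ⟨X,Y⟩ − ⟨dφ(X),∇_Y τ(φ)⟩ − ⟨dφ(Y),∇_X τ(φ)⟩`,
expressed pointwise in terms of the differential `dphi` of `φ`, the tension field `tau`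
and its covariant derivative `Dtau` (the trace `⟨dφ,∇τ(φ)⟩` being computed in an
orthonormal frame). -/
def S2 {m : ℕ} {F : Type*} [NormedAddCommGroup F] [InnerProductSpace ℝ F]
    (dphi : EuclideanSpace ℝ (Fin m) →ₗ[ℝ] F) (tau : F)
    (Dtau : EuclideanSpace ℝ (Fin m) →ₗ[ℝ] F)
    (X Y : EuclideanSpace ℝ (Fin m)) : ℝ :=
  (1 / 2 : ℝ) * ‖tau‖ ^ 2 * ⟪X, Y⟫
    + (∑ i, ⟪dphi (onb m i), Dtau (onb m i)⟫) * ⟪X, Y⟫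
    - ⟪dphi X, Dtau Y⟫ - ⟪dphi Y, Dtau X⟫

section Trace

variable {m : ℕ} {F : Type*} [NormedAddCommGroup F] [InnerProductSpace ℝ F]

theorem sum_S2_onb (dphi Dtau : EuclideanSpace ℝ (Fin m) →ₗ[ℝ] F) (tau : F) :
    ∑ i, S2 dphi tau Dtau (onb m i) (onb m i)
      = m / 2 * ‖tau‖ ^ 2 + (m - 2) * ∑ i, ⟪dphi (onb m i), Dtau (onb m i)⟫ := by
  simp only [S2, (onb m).inner_eq_one, mul_one, Finset.sum_sub_distrib, Finset.sum_add_distrib,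
    Finset.sum_const, Finset.card_univ, Fintype.card_fin, nsmul_eq_mul]
  ring

theorem sum_inner_dphi_Dtau_eq_neg_norm_sq {ι E : Type*} [Fintype ι] [AddCommMonoid E]
    [Module ℝ E] (dphi Dtau : E →ₗ[ℝ] F) (B : E →ₗ[ℝ] E →ₗ[ℝ] F) (tau : F) (e : ι → E)
    (htau : tau = ∑ i, B (e i) (e i))
    (hDtau : ∀ X, ⟪Dtau X, dphi X⟫ = -⟪tau, B X X⟫) :
    ∑ i, ⟪dphi (e i), Dtau (e i)⟫ = -‖tau‖ ^ 2 :=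
  calc ∑ i, ⟪dphi (e i), Dtau (e i)⟫
      = -⟪tau, ∑ i, B (e i) (e i)⟫ := by
        simp only [real_inner_comm (Dtau _), hDtau, inner_sum, Finset.sum_neg_distrib]
    _ = -‖tau‖ ^ 2 := by rw [← htau, real_inner_self_eq_norm_sq]

theorem sum_S2_onb_of_immersion (dphi Dtau : EuclideanSpace ℝ (Fin m) →ₗ[ℝ] F)
    (B : EuclideanSpace ℝ (Fin m) →ₗ[ℝ] EuclideanSpace ℝ (Fin m) →ₗ[ℝ] F) (tau : F)
    (htau : tau = ∑ i, B (onb m i) (onb m i))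
    (hDtau : ∀ X, ⟪Dtau X, dphi X⟫ = -⟪tau, B X X⟫) :
    ∑ i, S2 dphi tau Dtau (onb m i) (onb m i) = (4 - m) / 2 * ‖tau‖ ^ 2 := by
  rw [sum_S2_onb, sum_inner_dphi_Dtau_eq_neg_norm_sq dphi Dtau B tau (onb m) htau hDtau]
  ring

end Trace

theorem immersion_S2_zero_minimal_general
    (m : ℕ) (hm : m ≠ 4)
    (M : Type*) (F : Type*) [NormedAddCommGroup F] [InnerProductSpace ℝ F]
    (dphi : M → EuclideanSpace ℝ (Fin m) →ₗ[ℝ] F)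
    (B : M → EuclideanSpace ℝ (Fin m) →ₗ[ℝ] EuclideanSpace ℝ (Fin m) →ₗ[ℝ] F)
    (tau : M → F)
    (Dtau : M → EuclideanSpace ℝ (Fin m) →ₗ[ℝ] F)
    (htau : ∀ p, tau p = ∑ i, B p (onb m i) (onb m i))
    (hDtau : ∀ p X Y, ⟪Dtau p X, dphi p Y⟫ = -⟪tau p, B p X Y⟫)
    (hS2 : ∀ p X Y, S2 (dphi p) (tau p) (Dtau p) X Y = 0) :
    ∀ p, tau p = 0 := by
  intro p
  have htrace : (4 - m : ℝ) / 2 * ‖tau p‖ ^ 2 = 0 := by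
    rw [← sum_S2_onb_of_immersion (dphi p) (Dtau p) (B p) (tau p) (htau p)
      (fun X => hDtau p X X)]
    simp only [hS2, Finset.sum_const_zero]
  have hcoeff : (4 - m : ℝ) / 2 ≠ 0 :=
    div_ne_zero (sub_ne_zero.2 (by exact_mod_cast hm.symm)) two_ne_zero
  simpa [hcoeff] using htrace

/-- A Riemannian immersion `φ : (Mᵐ,g) → (N,h)` with `S₂ = 0` and
`m ≠ 4` is minimal (`τ(φ) = 0`); `M` need not be compact. -/
theorem immersion_S2_zero_minimal
    (m : ℕ) (hm : m ≠ 4)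
    (M : Type*) (F : Type*) [NormedAddCommGroup F] [InnerProductSpace ℝ F]
    (dphi : M → EuclideanSpace ℝ (Fin m) →ₗ[ℝ] F)
    (B : M → EuclideanSpace ℝ (Fin m) →ₗ[ℝ] EuclideanSpace ℝ (Fin m) →ₗ[ℝ] F)
    (tau : M → F)
    (Dtau : M → EuclideanSpace ℝ (Fin m) →ₗ[ℝ] F)
    (hiso : ∀ p X Y, ⟪dphi p X, dphi p Y⟫ = ⟪X, Y⟫)
    (hBsymm : ∀ p X Y, B p X Y = B p Y X)
    (hBnormal : ∀ p X Y Z, ⟪B p X Y, dphi p Z⟫ = 0)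
    (htau : ∀ p, tau p = ∑ i, B p (onb m i) (onb m i))
    (hDtau : ∀ p X Y, ⟪Dtau p X, dphi p Y⟫ = -⟪tau p, B p X Y⟫)
    (hS2 : ∀ p X Y, S2 (dphi p) (tau p) (Dtau p) X Y = 0) :
    ∀ p, tau p = 0 :=
  immersion_S2_zero_minimal_general m hm M F dphi B tau Dtau htau hDtau hS2

end
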